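/- arXiv:1701.05469 — 5 statements merged into one kernel-verified Lean document; each statement's English description precedes it below -/
import Mathlib

section
/- The restriction of the Cardan-angle map G to the open set U = (−π,π) × (−π/2,π/2) × (−π,π) is injective. -/
open Real Matrix

noncomputable def cardanG (α β γ : ℝ) : Matrix (Fin 3) (Fin 3) ℝ :=
  !![cos β * cos γ, -(cos β * sin γ), sin β;
     sin α * sin β * cos γ + cos α * sin γ,
       cos α * cos γ - sin α * sin β * sin γ, -(sin α * cos β);
     sin α * sin γ - cos α * sin β * cos γ,
       sin α * cos γ + cos α * sin β * sin γ, cos α * cos β]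

lemma eq_of_sin_cos {x y : ℝ} (hx : x ∈ Set.Ioo (-π) π) (hy : y ∈ Set.Ioo (-π) π)
    (hs : Real.sin x = Real.sin y) (hc : Real.cos x = Real.cos y) : x = y := by
  have habs : |x| = |y| := by
    apply Real.injOn_cos ⟨abs_nonneg x, abs_le.2 ⟨hx.1.le, hx.2.le⟩⟩
      ⟨abs_nonneg y, abs_le.2 ⟨hy.1.le, hy.2.le⟩⟩
    rwa [Real.cos_abs, Real.cos_abs]
  rcases abs_eq_abs.1 habs with h | h
  · exact h
  · subst h
    rw [Real.sin_neg] at hs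
    have hy0 : Real.sin y = 0 := by linarith
    have : y = 0 := by
      have := Real.sin_eq_zero_iff_of_lt_of_lt hy.1 hy.2
      exact this.1 hy0
    simp [this]

theorem cardan_injOn :
    Set.InjOn (fun p : ℝ × ℝ × ℝ => cardanG p.1 p.2.1 p.2.2)
      (Set.Ioo (-π) π ×ˢ Set.Ioo (-(π/2)) (π/2) ×ˢ Set.Ioo (-π) π) := by
  rintro ⟨a1, b1, c1⟩ ⟨ha1, hb1, hc1⟩ ⟨a2, b2, c2⟩ ⟨ha2, hb2, hc2⟩ h
  simp only [cardanG] at h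
  have e := fun i j => congrFun (congrFun h i) j
  have e02 := e 0 2; have e12 := e 1 2; have e22 := e 2 2
  have e00 := e 0 0; have e01 := e 0 1
  simp [Matrix.cons_val_zero, Matrix.cons_val_one, Matrix.head_cons,
    Matrix.cons_val_fin_one, show (2:Fin 3) = ⟨2, by norm_num⟩ from rfl] at e02 e12 e22 e00 e01
  -- β equal
  have hb : b1 = b2 := by
    apply Real.injOn_sin ⟨hb1.1.le, hb1.2.le⟩ ⟨hb2.1.le, hb2.2.le⟩ e02
  subst hb
  have hcb : Real.cos b1 > 0 := Real.cos_pos_of_mem_Ioo ⟨hb1.1, hb1.2⟩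
  have ha : a1 = a2 := by
    apply eq_of_sin_cos ha1 ha2
    · have : Real.sin a1 * Real.cos b1 = Real.sin a2 * Real.cos b1 := by linarith
      exact mul_right_cancel₀ (ne_of_gt hcb) this
    · exact mul_right_cancel₀ (ne_of_gt hcb) e22
  have hc : c1 = c2 := by
    apply eq_of_sin_cos hc1 hc2
    · have : Real.cos b1 * Real.sin c1 = Real.cos b1 * Real.sin c2 := by linarith
      exact mul_left_cancel₀ (ne_of_gt hcb) this
    · exact mul_left_cancel₀ (ne_of_gt hcb) e00
  simp [ha, hc]
end

section
/- Let c₁₂, c₁₃, c₂₃ > 0, k ∈ ℝ, L > 0 and λ₀ = (c₁₃ k)²/c₂₃ − 4π²c₁₂/L², and assume λ₀ > 0. Then the function w*(t) = ( (c₁₃ k L)/(2 c₂₃ π) (1 − cos(2πt/L)), 0, −sin(2πt/L) ) solves the linear ODE system c₂₃ w₁″ + c₁₃ k w₃′ = 0, c₁₃ w₂″ − λ₀ w₂ = 0, c₁₂ w₃″ − c₁₃ k w₁′ − λ₀ w₃ = 0 on [0,L], with w*(0) = w*(L) = 0. -/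
/-!
With `ω = 2π/L` and `C = c₁₃ k / (c₂₃ ω)`, the mode `(C (1 - cos ωt), 0, -sin ωt)` vanishes at
`0` and `L` because `ωL = 2π`. Differentiating, the first equation reduces to `c₂₃ C ω = c₁₃ k`,
which is the choice of `C`, and the third to the dispersion relation
`λ₀ = c₁₃ k C ω - c₁₂ ω² = (c₁₃ k)² / c₂₃ - 4π² c₁₂ / L²`.
-/

open Real

lemma deriv_sin_mul (ω : ℝ) : deriv (fun t => sin (ω * t)) = fun t => ω * cos (ω * t) := by
  funext t
  simp [deriv_comp_mul_left ω sin t]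

lemma deriv_cos_mul (ω : ℝ) : deriv (fun t => cos (ω * t)) = fun t => -(ω * sin (ω * t)) := by
  funext t
  simp [deriv_comp_mul_left ω cos t]

section CosineMode

variable (C ω : ℝ)

lemma deriv_const_mul_one_sub_cos_mul :
    deriv (fun t => C * (1 - cos (ω * t))) = fun t => C * ω * sin (ω * t) := by
  funext t
  have hcos : DifferentiableAt ℝ (fun t => cos (ω * t)) t := by fun_prop
  rw [deriv_const_mul C (hcos.const_sub 1), deriv_const_sub, deriv_cos_mul]
  ring

lemma deriv_deriv_const_mul_one_sub_cos_mul :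
    deriv (deriv fun t => C * (1 - cos (ω * t))) = fun t => C * ω ^ 2 * cos (ω * t) := by
  funext t
  rw [deriv_const_mul_one_sub_cos_mul,
    deriv_const_mul _ (by fun_prop : DifferentiableAt ℝ (fun t => sin (ω * t)) t), deriv_sin_mul]
  ring

lemma deriv_neg_sin_mul : deriv (fun t => -sin (ω * t)) = fun t => -(ω * cos (ω * t)) := by
  funext t
  rw [deriv.fun_neg, deriv_sin_mul]

lemma deriv_deriv_neg_sin_mul :
    deriv (deriv fun t => -sin (ω * t)) = fun t => ω ^ 2 * sin (ω * t) := by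
  funext t
  rw [deriv_neg_sin_mul, deriv.fun_neg,
    deriv_const_mul _ (by fun_prop : DifferentiableAt ℝ (fun t => cos (ω * t)) t), deriv_cos_mul]
  ring

theorem cosine_mode_solves_coupled_system (c₁₂ c₂₃ a lam : ℝ)
    (hC : c₂₃ * (C * ω) = a) (hlam : lam = a * (C * ω) - c₁₂ * ω ^ 2) (t : ℝ) :
    c₂₃ * deriv (deriv fun t => C * (1 - cos (ω * t))) t + a * deriv (fun t => -sin (ω * t)) t
        = 0 ∧
      c₁₂ * deriv (deriv fun t => -sin (ω * t)) t
          - a * deriv (fun t => C * (1 - cos (ω * t))) t - lam * -sin (ω * t) = 0 := by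
  rw [deriv_deriv_const_mul_one_sub_cos_mul, deriv_deriv_neg_sin_mul, deriv_neg_sin_mul,
    deriv_const_mul_one_sub_cos_mul, hlam, ← hC]
  constructor <;> ring

end CosineMode

theorem wstar_solves_linearized_system_general
    (c₁₂ c₁₃ c₂₃ k L : ℝ) (h23 : 0 < c₂₃)
    (hL : 0 < L)
    (lam0 : ℝ) (hlam : lam0 = (c₁₃ * k)^2 / c₂₃ - 4 * π^2 * c₁₂ / L^2)
    (w₁ w₂ w₃ : ℝ → ℝ)
    (hw₁ : w₁ = fun t => (c₁₃ * k * L) / (2 * c₂₃ * π) * (1 - cos (2 * π * t / L)))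
    (hw₂ : w₂ = fun _ => (0:ℝ))
    (hw₃ : w₃ = fun t => -sin (2 * π * t / L)) :
    (w₁ 0 = 0 ∧ w₂ 0 = 0 ∧ w₃ 0 = 0) ∧
    (w₁ L = 0 ∧ w₂ L = 0 ∧ w₃ L = 0) ∧
    ∀ t ∈ Set.Icc (0:ℝ) L,
      c₂₃ * deriv (deriv w₁) t + c₁₃ * k * deriv w₃ t = 0 ∧
      c₁₃ * deriv (deriv w₂) t - lam0 * w₂ t = 0 ∧
      c₁₂ * deriv (deriv w₃) t - c₁₃ * k * deriv w₁ t - lam0 * w₃ t = 0 := by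
  set ω := 2 * π / L
  set C := (c₁₃ * k * L) / (2 * c₂₃ * π)
  simp_rw [mul_div_right_comm (2 * π) _ L] at hw₁ hw₃
  subst hw₁ hw₂ hw₃
  have hC : c₂₃ * (C * ω) = c₁₃ * k := by
    simp only [C, ω]
    field_simp [pi_ne_zero]
  have hdispersion : lam0 = c₁₃ * k * (C * ω) - c₁₂ * ω ^ 2 := by
    rw [hlam, ← hC]
    simp only [C, ω]
    field_simp [pi_ne_zero]
    ring
  refine ⟨by simp, by simp [div_mul_cancel₀ _ hL.ne'], fun t _ => ?_⟩
  obtain ⟨h₁, h₃⟩ := cosine_mode_solves_coupled_system C ω c₁₂ c₂₃ (c₁₃ * k) lam0 hC hdispersion t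
  exact ⟨h₁, by simp, h₃⟩

theorem wstar_solves_linearized_system
    (c₁₂ c₁₃ c₂₃ k L : ℝ) (h12 : 0 < c₁₂) (h13 : 0 < c₁₃) (h23 : 0 < c₂₃)
    (hL : 0 < L)
    (lam0 : ℝ) (hlam : lam0 = (c₁₃ * k)^2 / c₂₃ - 4 * π^2 * c₁₂ / L^2)
    (hpos : 0 < lam0)
    (w₁ w₂ w₃ : ℝ → ℝ)
    (hw₁ : w₁ = fun t => (c₁₃ * k * L) / (2 * c₂₃ * π) * (1 - cos (2 * π * t / L)))
    (hw₂ : w₂ = fun _ => (0:ℝ))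
    (hw₃ : w₃ = fun t => -sin (2 * π * t / L)) :
    (w₁ 0 = 0 ∧ w₂ 0 = 0 ∧ w₃ 0 = 0) ∧
    (w₁ L = 0 ∧ w₂ L = 0 ∧ w₃ L = 0) ∧
    ∀ t ∈ Set.Icc (0:ℝ) L,
      c₂₃ * deriv (deriv w₁) t + c₁₃ * k * deriv w₃ t = 0 ∧
      c₁₃ * deriv (deriv w₂) t - lam0 * w₂ t = 0 ∧
      c₁₂ * deriv (deriv w₃) t - c₁₃ * k * deriv w₁ t - lam0 * w₃ t = 0 :=
  wstar_solves_linearized_system_general c₁₂ c₁₃ c₂₃ k L h23 hL lam0 hlam w₁ w₂ w₃ hw₁ hw₂ hw₃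
end

section
/- Let c₁₂, c₁₃, c₂₃ > 0, k ∈ ℝ, L > 0, λ₀ = (c₁₃ k)²/c₂₃ − 4π²c₁₂/L² > 0. Every C² solution w = (w₁,w₂,w₃) : [0,L] → ℝ³ of the system c₂₃ w₁″ + c₁₃ k w₃′ = 0, c₁₃ w₂″ − λ₀ w₂ = 0, c₁₂ w₃″ − c₁₃ k w₁′ − λ₀ w₃ = 0 with Dirichlet boundary conditions w(0) = w(L) = 0 is a scalar multiple of w*(t) = ( (c₁₃ k L)/(2 c₂₃ π)(1 − cos(2πt/L)), 0, −sin(2πt/L) ); i.e. the solution space is one-dimensional. -/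
open Real Set

/-!
The first equation integrates to `c₂₃ w₁' + c₁₃ k w₃ = A`. Substituting this into the third turns
it into the forced oscillator `w₃'' = -μ² (w₃ - C)` with `μ = 2π/L`: the value of `λ₀` is exactly
`(c₁₃ k)² = c₂₃ (λ₀ + c₁₂ μ²)`. Hence `w₃ = C (1 - cos μt) + b sin μt`, and integrating the first
integral once more gives `w₁`. Now `w₁(L) = 0` forces `A = c₁₃ k C`, which is compatible with
`c₁₂ c₂₃ μ² C = c₁₃ k A` only if `c₂₃ λ₀ C = 0`, i.e. `C = 0`. The decoupled component solves
`w₂'' = (λ₀ / c₁₃) w₂` with zero boundary values, so it vanishes by the maximum principle.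
-/

lemma eqOn_Icc_of_hasDerivAt {f g f' : ℝ → ℝ} {a b : ℝ}
    (hf : ∀ x ∈ Icc a b, HasDerivAt f (f' x) x) (hg : ∀ x ∈ Icc a b, HasDerivAt g (f' x) x)
    (ha : f a = g a) : EqOn f g (Icc a b) :=
  eq_of_has_deriv_right_eq (fun x hx => (hf x (Ico_subset_Icc_self hx)).hasDerivWithinAt)
    (fun x hx => (hg x (Ico_subset_Icc_self hx)).hasDerivWithinAt)
    (fun x hx => (hf x hx).continuousAt.continuousWithinAt)
    (fun x hx => (hg x hx).continuousAt.continuousWithinAt) ha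

/-- Maximum principle: `(v ^ 2)'' = 2 v' ^ 2 + 2 v v'' ≥ 0`, so `v ^ 2` is convex and bounded by
its boundary values. -/
lemma eqOn_zero_of_mul_deriv_deriv_nonneg {v : ℝ → ℝ} {a b : ℝ} (hv : Differentiable ℝ v)
    (hv' : Differentiable ℝ (deriv v)) (ha : v a = 0) (hb : v b = 0)
    (h : ∀ x ∈ Icc a b, 0 ≤ v x * deriv (deriv v) x) : EqOn v 0 (Icc a b) := by
  have hsq (x : ℝ) : HasDerivAt (fun y => v y ^ 2) (2 * v x * deriv v x) x :=
    ((hv x).hasDerivAt.fun_pow 2).congr_deriv (by ring)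
  have hsq' (x : ℝ) : HasDerivAt (fun y => 2 * v y * deriv v y)
      (2 * deriv v x ^ 2 + 2 * (v x * deriv (deriv v) x)) x :=
    (((hv x).hasDerivAt.const_mul 2).mul (hv' x).hasDerivAt).congr_deriv (by ring)
  have hderiv : deriv (fun y => v y ^ 2) = fun y => 2 * v y * deriv v y :=
    funext fun x => (hsq x).deriv
  have hconvex : ConvexOn ℝ (Icc a b) (fun y => v y ^ 2) := by
    refine convexOn_of_deriv2_nonneg' (convex_Icc a b)
      (fun x _ => (hsq x).differentiableAt.differentiableWithinAt)
      (fun x _ => by rw [hderiv]; exact (hsq' x).differentiableAt.differentiableWithinAt)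
      (fun x hx => ?_)
    rw [Function.iterate_succ_apply', Function.iterate_one, hderiv, (hsq' x).deriv]
    have := h x hx
    positivity
  intro x hx
  have hle : v x ^ 2 ≤ 0 := by
    simpa [ha, hb] using hconvex.le_max_of_mem_Icc (left_mem_Icc.2 (hx.1.trans hx.2))
      (right_mem_Icc.2 (hx.1.trans hx.2)) hx
  exact pow_eq_zero_iff two_ne_zero |>.1 (le_antisymm hle (sq_nonneg _))

/-- Uniqueness for the harmonic oscillator with zero initial data, by conservation of the
energy `v' ^ 2 + μ ^ 2 * v ^ 2`. -/
lemma eqOn_zero_of_hasDerivAt_neg_sq_mul {v v' : ℝ → ℝ} {μ a b : ℝ} (hμ : μ ≠ 0)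
    (hv : ∀ x ∈ Icc a b, HasDerivAt v (v' x) x)
    (hv' : ∀ x ∈ Icc a b, HasDerivAt v' (-μ ^ 2 * v x) x)
    (ha : v a = 0) (ha' : v' a = 0) : EqOn v 0 (Icc a b) := by
  have henergy : EqOn (fun x => v' x ^ 2 + μ ^ 2 * v x ^ 2) 0 (Icc a b) := by
    refine eqOn_Icc_of_hasDerivAt (f' := fun _ => 0) (fun x hx => ?_)
      (fun x _ => hasDerivAt_const x 0) (by simp [ha, ha'])
    exact (((hv' x hx).fun_pow 2).add (((hv x hx).fun_pow 2).const_mul (μ ^ 2))).congr_deriv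
      (by ring)
  intro x hx
  have hE : v' x ^ 2 + μ ^ 2 * v x ^ 2 = 0 := henergy hx
  have hμv : μ ^ 2 * v x ^ 2 = 0 := by
    nlinarith [sq_nonneg (v' x), mul_nonneg (sq_nonneg μ) (sq_nonneg (v x))]
  simpa [hμ] using hμv

lemma eqOn_cos_sin_of_deriv_deriv_eq {u : ℝ → ℝ} {μ C b : ℝ} (hμ : μ ≠ 0)
    (hu : Differentiable ℝ u) (hu' : Differentiable ℝ (deriv u))
    (h : ∀ x ∈ Icc 0 b, deriv (deriv u) x = -μ ^ 2 * (u x - C)) :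
    EqOn u (fun x => C + (u 0 - C) * cos (μ * x) + deriv u 0 / μ * sin (μ * x)) (Icc 0 b) := by
  set s := fun x => C + (u 0 - C) * cos (μ * x) + deriv u 0 / μ * sin (μ * x)
  set s' := fun x => deriv u 0 * cos (μ * x) - μ * (u 0 - C) * sin (μ * x)
  have hlin (x : ℝ) : HasDerivAt (fun y => μ * y) μ x := hasDerivAt_const_mul μ
  have hs (x : ℝ) : HasDerivAt s (s' x) x :=
    ((((hlin x).cos.const_mul _).const_add C).add ((hlin x).sin.const_mul _)).congr_deriv
      (by field_simp; ring)
  have hs' (x : ℝ) : HasDerivAt s' (-μ ^ 2 * (s x - C)) x :=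
    (((hlin x).cos.const_mul _).sub ((hlin x).sin.const_mul _)).congr_deriv
      (by simp only [s]; field_simp; ring)
  have hzero : EqOn (u - s) 0 (Icc 0 b) :=
    eqOn_zero_of_hasDerivAt_neg_sq_mul (v' := fun x => deriv u x - s' x) hμ
      (fun x _ => (hu x).hasDerivAt.sub (hs x))
      (fun x hx => ((hu' x).hasDerivAt.sub (hs' x)).congr_deriv
        (by simp only [h x hx, Pi.sub_apply]; ring))
      (by simp [s]) (by simp [s'])
  exact fun x hx => sub_eq_zero.1 (hzero hx)

section CoupledSystem

variable {c₁₂ c₂₃ α lam μ L : ℝ} {w₁ w₃ : ℝ → ℝ}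

lemma coupled_system_w₃_eq (hc₁₂ : c₁₂ ≠ 0) (hc₂₃ : c₂₃ ≠ 0) (hμ : μ ≠ 0)
    (hα : α ^ 2 = c₂₃ * (lam + c₁₂ * μ ^ 2)) (hw₁' : Differentiable ℝ (deriv w₁))
    (hw₃ : Differentiable ℝ w₃) (hw₃' : Differentiable ℝ (deriv w₃)) (hw₃0 : w₃ 0 = 0)
    (heq₁ : ∀ t ∈ Icc 0 L, c₂₃ * deriv (deriv w₁) t + α * deriv w₃ t = 0)
    (heq₃ : ∀ t ∈ Icc 0 L, c₁₂ * deriv (deriv w₃) t - α * deriv w₁ t - lam * w₃ t = 0) :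
    ∃ A C b, c₁₂ * c₂₃ * μ ^ 2 * C = α * A ∧ ∀ t ∈ Icc 0 L,
      c₂₃ * deriv w₁ t + α * w₃ t = A ∧ w₃ t = C * (1 - cos (μ * t)) + b * sin (μ * t) := by
  set A := c₂₃ * deriv w₁ 0
  set C := α * A / (c₁₂ * c₂₃ * μ ^ 2)
  have hC : c₁₂ * c₂₃ * μ ^ 2 * C = α * A := by simp only [C]; field_simp
  have hfirst : EqOn (fun t => c₂₃ * deriv w₁ t + α * w₃ t) (fun _ => A) (Icc 0 L) :=
    eqOn_Icc_of_hasDerivAt (f' := fun _ => 0)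
      (fun t ht => (((hw₁' t).hasDerivAt.const_mul c₂₃).add
        ((hw₃ t).hasDerivAt.const_mul α)).congr_deriv (heq₁ t ht))
      (fun t _ => hasDerivAt_const t A) (by simp [A, hw₃0])
  have hw₃'' (t : ℝ) (ht : t ∈ Icc 0 L) : deriv (deriv w₃) t = -μ ^ 2 * (w₃ t - C) := by
    apply mul_left_cancel₀ (mul_ne_zero hc₁₂ hc₂₃)
    linear_combination c₂₃ * heq₃ t ht + α * hfirst ht - w₃ t * hα - hC
  refine ⟨A, C, deriv w₃ 0 / μ, hC, fun t ht => ⟨hfirst ht, ?_⟩⟩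
  rw [eqOn_cos_sin_of_deriv_deriv_eq hμ hw₃ hw₃' hw₃'' ht, hw₃0]
  ring

lemma coupled_system_eq (hc₁₂ : c₁₂ ≠ 0) (hc₂₃ : c₂₃ ≠ 0) (hlam : lam ≠ 0) (hL : 0 < L)
    (hμL : μ * L = 2 * π) (hα : α ^ 2 = c₂₃ * (lam + c₁₂ * μ ^ 2))
    (hw₁ : Differentiable ℝ w₁) (hw₁' : Differentiable ℝ (deriv w₁))
    (hw₃ : Differentiable ℝ w₃) (hw₃' : Differentiable ℝ (deriv w₃))
    (hw₁0 : w₁ 0 = 0) (hw₁L : w₁ L = 0) (hw₃0 : w₃ 0 = 0)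
    (heq₁ : ∀ t ∈ Icc 0 L, c₂₃ * deriv (deriv w₁) t + α * deriv w₃ t = 0)
    (heq₃ : ∀ t ∈ Icc 0 L, c₁₂ * deriv (deriv w₃) t - α * deriv w₁ t - lam * w₃ t = 0) :
    ∃ b, ∀ t ∈ Icc 0 L, w₃ t = b * sin (μ * t) ∧ c₂₃ * μ * w₁ t = α * b * (cos (μ * t) - 1) := by
  have hμ : μ ≠ 0 := by rintro rfl; simp [pi_ne_zero] at hμL
  obtain ⟨A, C, b, hC, hsol⟩ :=
    coupled_system_w₃_eq hc₁₂ hc₂₃ hμ hα hw₁' hw₃ hw₃' hw₃0 heq₁ heq₃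
  have hw₁_eq : EqOn (fun t => c₂₃ * w₁ t) (fun t => (A - α * C) * t + α * C / μ * sin (μ * t)
      + α * b / μ * (cos (μ * t) - 1)) (Icc 0 L) := by
    refine eqOn_Icc_of_hasDerivAt (f' := fun t => c₂₃ * deriv w₁ t)
      (fun t _ => (hw₁ t).hasDerivAt.const_mul c₂₃) (fun t ht => ?_) (by simp [hw₁0])
    refine ((((hasDerivAt_id' t).const_mul (A - α * C)).add
      ((hasDerivAt_const_mul (x := t) μ).sin.const_mul _)).add
      (((hasDerivAt_const_mul (x := t) μ).cos.sub_const 1).const_mul _)).congr_deriv ?_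
    linear_combination -(hsol t ht).1 + α * (hsol t ht).2
      + (α * C * cos (μ * t) - α * b * sin (μ * t)) * mul_inv_cancel₀ hμ
  have hAC : A = α * C := by
    have hL_eq := hw₁_eq (right_mem_Icc.2 hL.le)
    simp only [hw₁L, hμL, sin_two_pi, cos_two_pi] at hL_eq
    have : (A - α * C) * L = 0 := by linear_combination -hL_eq
    exact sub_eq_zero.1 ((mul_eq_zero.1 this).resolve_right hL.ne')
  have hC0 : C = 0 := by
    have : c₂₃ * lam * C = 0 := by linear_combination -C * hα - hC - α * hAC
    exact (mul_eq_zero.1 this).resolve_left (mul_ne_zero hc₂₃ hlam)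
  refine ⟨b, fun t ht => ⟨by simpa [hC0] using (hsol t ht).2, ?_⟩⟩
  have := hw₁_eq ht
  simp only [hAC, hC0, mul_zero, sub_self, zero_mul, zero_div, zero_add] at this
  rw [mul_right_comm, this]
  field_simp

end CoupledSystem

theorem kernel_one_dimensional_general
    (c₁₂ c₁₃ c₂₃ k L : ℝ) (h12 : 0 < c₁₂) (h13 : 0 < c₁₃) (h23 : 0 < c₂₃)
    (hL : 0 < L)
    (lam0 : ℝ) (hlam : lam0 = (c₁₃ * k)^2 / c₂₃ - 4 * π^2 * c₁₂ / L^2)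
    (hpos : 0 < lam0)
    (w₁ w₂ w₃ : ℝ → ℝ)
    (hC₁ : ContDiff ℝ 2 w₁) (hC₂ : ContDiff ℝ 2 w₂) (hC₃ : ContDiff ℝ 2 w₃)
    (hbc0 : w₁ 0 = 0 ∧ w₂ 0 = 0 ∧ w₃ 0 = 0)
    (hbcL : w₁ L = 0 ∧ w₂ L = 0 ∧ w₃ L = 0)
    (heq : ∀ t ∈ Set.Icc (0:ℝ) L,
      c₂₃ * deriv (deriv w₁) t + c₁₃ * k * deriv w₃ t = 0 ∧
      c₁₃ * deriv (deriv w₂) t - lam0 * w₂ t = 0 ∧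
      c₁₂ * deriv (deriv w₃) t - c₁₃ * k * deriv w₁ t - lam0 * w₃ t = 0) :
    ∃ c : ℝ, ∀ t ∈ Set.Icc (0:ℝ) L,
      w₁ t = c * ((c₁₃ * k * L) / (2 * c₂₃ * π) * (1 - cos (2 * π * t / L))) ∧
      w₂ t = 0 ∧
      w₃ t = c * (-sin (2 * π * t / L)) := by
  obtain ⟨hw₁0, hw₂0, hw₃0⟩ := hbc0
  obtain ⟨hw₁L, hw₂L, -⟩ := hbcL
  have hdiff {w : ℝ → ℝ} (hw : ContDiff ℝ 2 w) : Differentiable ℝ (deriv w) :=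
    (hw.deriv' (n := 1)).differentiable one_ne_zero
  have hw₂ : EqOn w₂ 0 (Icc 0 L) := by
    refine eqOn_zero_of_mul_deriv_deriv_nonneg (hC₂.differentiable two_ne_zero) (hdiff hC₂)
      hw₂0 hw₂L fun t ht => (mul_nonneg_iff_of_pos_left h13).1 ?_
    rw [show c₁₃ * (w₂ t * deriv (deriv w₂) t) = lam0 * w₂ t ^ 2 by
      linear_combination w₂ t * (heq t ht).2.1]
    positivity
  set μ := 2 * π / L
  have hμL : μ * L = 2 * π := div_mul_cancel₀ _ hL.ne'
  have hα : (c₁₃ * k) ^ 2 = c₂₃ * (lam0 + c₁₂ * μ ^ 2) := by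
    rw [hlam]; simp only [μ]; field_simp; ring
  obtain ⟨b, hb⟩ := coupled_system_eq h12.ne' h23.ne' hpos.ne' hL hμL hα
    (hC₁.differentiable two_ne_zero) (hdiff hC₁) (hC₃.differentiable two_ne_zero) (hdiff hC₃)
    hw₁0 hw₁L hw₃0 (fun t ht => (heq t ht).1) (fun t ht => (heq t ht).2.2)
  have harg (t : ℝ) : 2 * π * t / L = μ * t := by ring
  have hcoef : c₁₃ * k * L / (2 * c₂₃ * π) = c₁₃ * k / (c₂₃ * μ) := by
    simp only [μ]; field_simp
  refine ⟨-b, fun t ht => ⟨?_, hw₂ ht, ?_⟩⟩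
  · have hμ : μ ≠ 0 := by positivity
    rw [harg, hcoef]
    clear_value μ
    field_simp
    linear_combination (hb t ht).2
  · rw [harg, (hb t ht).1]; ring

theorem kernel_one_dimensional
    (c₁₂ c₁₃ c₂₃ k L : ℝ) (h12 : 0 < c₁₂) (h13 : 0 < c₁₃) (h23 : 0 < c₂₃)
    (hk : k ≠ 0) (hL : 0 < L)
    (lam0 : ℝ) (hlam : lam0 = (c₁₃ * k)^2 / c₂₃ - 4 * π^2 * c₁₂ / L^2)
    (hpos : 0 < lam0)
    (w₁ w₂ w₃ : ℝ → ℝ)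
    (hC₁ : ContDiff ℝ 2 w₁) (hC₂ : ContDiff ℝ 2 w₂) (hC₃ : ContDiff ℝ 2 w₃)
    (hbc0 : w₁ 0 = 0 ∧ w₂ 0 = 0 ∧ w₃ 0 = 0)
    (hbcL : w₁ L = 0 ∧ w₂ L = 0 ∧ w₃ L = 0)
    (heq : ∀ t ∈ Set.Icc (0:ℝ) L,
      c₂₃ * deriv (deriv w₁) t + c₁₃ * k * deriv w₃ t = 0 ∧
      c₁₃ * deriv (deriv w₂) t - lam0 * w₂ t = 0 ∧
      c₁₂ * deriv (deriv w₃) t - c₁₃ * k * deriv w₁ t - lam0 * w₃ t = 0) :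
    ∃ c : ℝ, ∀ t ∈ Set.Icc (0:ℝ) L,
      w₁ t = c * ((c₁₃ * k * L) / (2 * c₂₃ * π) * (1 - cos (2 * π * t / L))) ∧
      w₂ t = 0 ∧
      w₃ t = c * (-sin (2 * π * t / L)) :=
  kernel_one_dimensional_general c₁₂ c₁₃ c₂₃ k L h12 h13 h23 hL lam0 hlam hpos w₁ w₂ w₃ hC₁ hC₂ hC₃
    hbc0 hbcL heq
end

section
/- Let c₁₂, c₁₃, c₂₃ > 0, k ∈ ℝ, L > 0 and λ₀ = (c₁₃k)²/c₂₃ − 4π²c₁₂/L² > 0. There is no pair (w₁, w₃) of C² functions on [0,L] with w₁(0)=w₁(L)=w₃(0)=w₃(L)=0 solving c₂₃ w₁″ + c₁₃ k w₃′ = 0 and c₁₂ w₃″ − c₁₃ k w₁′ − λ₀ w₃ = λ₀ sin(2πt/L) on [0,L] (transversality: the right-hand side λ₀ sin(2πt/L)e₃ is not in the range of the linearized operator). -/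
/-
With ω = 2π/L, the operator w ↦ w'' + ω²w with Dirichlet conditions on [0, L] is formally
self-adjoint and kills sin(ωt), so ∫₀ᴸ (w₃'' + ω²w₃) sin(ωt) = 0 whenever w₃(0) = w₃(L) = 0.
Integrating the first equation once gives c₂₃w₁' + c₁₃k w₃ = C; eliminating w₁' from the second
equation, the definition of λ₀ turns it into c₂₃c₁₂(w₃'' + ω²w₃) = c₂₃λ₀ sin(ωt) + c₁₃kC.
Testing against sin(ωt) gives 0 = c₂₃λ₀L/2, a contradiction.
-/

open Real Set MeasureTheory

theorem integral_deriv_deriv_add_sq_mul_mul_sin_eq_zero {f : ℝ → ℝ} (hf : ContDiff ℝ 2 f)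
    {ω a b : ℝ} (hfa : f a = 0) (hfb : f b = 0) (hsa : sin (ω * a) = 0)
    (hsb : sin (ω * b) = 0) :
    ∫ t in a..b, (deriv (deriv f) t + ω ^ 2 * f t) * sin (ω * t) = 0 := by
  have hf' : Differentiable ℝ f := hf.differentiable (by norm_num)
  have hf'' : Differentiable ℝ (deriv f) := hf.differentiable_deriv_two
  have hcont : Continuous fun t ↦ (deriv (deriv f) t + ω ^ 2 * f t) * sin (ω * t) := by
    have := hf.continuous_deriv (by norm_num)
    have : Continuous (deriv (deriv f)) := (ContDiff.deriv' (n := 1) hf).continuous_deriv_one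
    fun_prop
  have hF : ∀ t, HasDerivAt (fun s ↦ deriv f s * sin (ω * s) - ω * f s * cos (ω * s))
      ((deriv (deriv f) t + ω ^ 2 * f t) * sin (ω * t)) t := by
    intro t
    have hlin : HasDerivAt (fun s ↦ ω * s) ω t := by
      simpa using (hasDerivAt_id' t).const_mul ω
    exact (((hf'' t).hasDerivAt.mul hlin.sin).sub
      (((hf' t).hasDerivAt.const_mul ω).mul hlin.cos)).congr_deriv (by ring)
  rw [intervalIntegral.integral_eq_sub_of_hasDerivAt (fun t _ ↦ hF t)
    (hcont.intervalIntegrable a b)]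
  simp [hfa, hfb, hsa, hsb]

theorem integral_mul_sin_add_mul_sin_of_mul_eq_two_pi {ω L : ℝ} (hωL : ω * L = 2 * π)
    (A B : ℝ) : ∫ t in (0 : ℝ)..L, (A * sin (ω * t) + B) * sin (ω * t) = A * L / 2 := by
  have hω : ω ≠ 0 := by rintro rfl; simp at hωL
  have hsin : ∫ t in (0 : ℝ)..L, sin (ω * t) = 0 := by
    simp [intervalIntegral.integral_comp_mul_left (fun x ↦ sin x) hω, hωL]
  have hsq : ∫ t in (0 : ℝ)..L, sin (ω * t) ^ 2 = L / 2 := by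
    rw [intervalIntegral.integral_comp_mul_left (fun x ↦ sin x ^ 2) hω, mul_zero, hωL,
      integral_sin_sq]
    simp only [sin_zero, cos_zero, mul_one, sin_two_pi, cos_two_pi, sub_self, zero_add, sub_zero,
      smul_eq_mul]
    field_simp
    linarith
  simp_rw [add_mul, mul_assoc, ← pow_two]
  rw [intervalIntegral.integral_add, intervalIntegral.integral_const_mul,
    intervalIntegral.integral_const_mul, hsq, hsin]
  · ring
  all_goals exact (by fun_prop : Continuous _).intervalIntegrable _ _

theorem mul_add_mul_eq_of_mul_deriv_add_mul_deriv_eq_zero {u v : ℝ → ℝ}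
    (hu : Differentiable ℝ u) (hv : Differentiable ℝ v) {α β a b : ℝ}
    (h : ∀ t ∈ Icc a b, α * deriv u t + β * deriv v t = 0) :
    ∀ t ∈ Icc a b, α * u t + β * v t = α * u a + β * v a := by
  refine constant_of_has_deriv_right_zero
    ((continuous_const.mul hu.continuous).add (continuous_const.mul hv.continuous)).continuousOn
    fun t ht ↦ ?_
  rw [← h t (Ico_subset_Icc_self ht)]
  exact (((hu t).hasDerivAt.const_mul α).add ((hv t).hasDerivAt.const_mul β)).hasDerivWithinAt

theorem transversality_no_solution_general
    (c₁₂ c₁₃ c₂₃ k L : ℝ) (h23 : 0 < c₂₃)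
    (hL : 0 < L)
    (lam0 : ℝ) (hlam : lam0 = (c₁₃ * k)^2 / c₂₃ - 4 * π^2 * c₁₂ / L^2)
    (hpos : 0 < lam0) :
    ¬ ∃ w₁ w₃ : ℝ → ℝ,
      ContDiff ℝ 2 w₁ ∧ ContDiff ℝ 2 w₃ ∧
      w₁ 0 = 0 ∧ w₁ L = 0 ∧ w₃ 0 = 0 ∧ w₃ L = 0 ∧
      (∀ t ∈ Set.Icc (0:ℝ) L,
        c₂₃ * deriv (deriv w₁) t + c₁₃ * k * deriv w₃ t = 0 ∧
        c₁₂ * deriv (deriv w₃) t - c₁₃ * k * deriv w₁ t - lam0 * w₃ t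
          = lam0 * sin (2 * π * t / L)) := by
  rintro ⟨w₁, w₃, hw₁, hw₃, -, -, hw₃0, hw₃L, hsys⟩
  set ω := 2 * π / L
  have hωL : ω * L = 2 * π := div_mul_cancel₀ _ hL.ne'
  have hfirst := mul_add_mul_eq_of_mul_deriv_add_mul_deriv_eq_zero hw₁.differentiable_deriv_two
    (hw₃.differentiable two_ne_zero) fun t ht ↦ (hsys t ht).1
  set C := c₂₃ * deriv w₁ 0 + c₁₃ * k * w₃ 0
  have hreduced : ∀ t ∈ Icc 0 L, c₂₃ * c₁₂ * ((deriv (deriv w₃) t + ω ^ 2 * w₃ t) * sin (ω * t))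
      = (c₂₃ * lam0 * sin (ω * t) + c₁₃ * k * C) * sin (ω * t) := by
    intro t ht
    have harg : 2 * π * t / L = ω * t := by ring
    have hfreq : c₂₃ * c₁₂ * ω ^ 2 = (c₁₃ * k) ^ 2 - c₂₃ * lam0 := by
      rw [hlam]; field_simp; linear_combination (c₂₃ * c₁₂ * (ω * L + 2 * π)) * hωL
    have hsecond := (hsys t ht).2
    rw [harg] at hsecond
    linear_combination (c₂₃ * sin (ω * t)) * hsecond + (c₁₃ * k * sin (ω * t)) * hfirst t ht
      + (w₃ t * sin (ω * t)) * hfreq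
  have hint := intervalIntegral.integral_congr (μ := volume)
    fun t ht ↦ hreduced t (by rwa [uIcc_of_le hL.le] at ht)
  rw [intervalIntegral.integral_const_mul,
    integral_deriv_deriv_add_sq_mul_mul_sin_eq_zero hw₃ hw₃0 hw₃L (by simp) (by rw [hωL, sin_two_pi]),
    integral_mul_sin_add_mul_sin_of_mul_eq_two_pi hωL] at hint
  have hrhs_pos : 0 < c₂₃ * lam0 * L / 2 := by positivity
  linarith

theorem transversality_no_solution
    (c₁₂ c₁₃ c₂₃ k L : ℝ) (h12 : 0 < c₁₂) (h13 : 0 < c₁₃) (h23 : 0 < c₂₃)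
    (hL : 0 < L)
    (lam0 : ℝ) (hlam : lam0 = (c₁₃ * k)^2 / c₂₃ - 4 * π^2 * c₁₂ / L^2)
    (hpos : 0 < lam0) :
    ¬ ∃ w₁ w₃ : ℝ → ℝ,
      ContDiff ℝ 2 w₁ ∧ ContDiff ℝ 2 w₃ ∧
      w₁ 0 = 0 ∧ w₁ L = 0 ∧ w₃ 0 = 0 ∧ w₃ L = 0 ∧
      (∀ t ∈ Set.Icc (0:ℝ) L,
        c₂₃ * deriv (deriv w₁) t + c₁₃ * k * deriv w₃ t = 0 ∧
        c₁₂ * deriv (deriv w₃) t - c₁₃ * k * deriv w₁ t - lam0 * w₃ t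
          = lam0 * sin (2 * π * t / L)) :=
  transversality_no_solution_general c₁₂ c₁₃ c₂₃ k L h23 hL lam0 hlam hpos
end

section
/- Let C = diag(c₂₃, c₁₃, c₁₂) with c₁₂, c₁₃, c₂₃ > 0, k ∈ ℝ, f_crit = (c₁₃k)²/c₂₃ − 4π²c₁₂/L² > 0, and define Q(w) = ∫₀ᴸ ⟨C w′, w′⟩ − c₁₃k (w₁ w₃′ − w₁′ w₃) + f_crit (w₂² + w₃²) dt for w ∈ C¹ functions [0,L] → ℝ³ with w(0) = w(L) = 0. Then Q(w) ≥ 0 for all such w, and Q(w*) = 0 for w*(t) = ( (c₁₃kL)/(2c₂₃π)(1 − cos(2πt/L)), 0, −sin(2πt/L) ). -/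
open Real Set intervalIntegral
open MeasureTheory (volume MemLp memLp_two_iff_integrable_sq_norm)

/-!
Integrating the twist term by parts and completing the square with `g = w₁' + (c₁₃ k / c₂₃) w₃`
turns `Q` into `c₂₃ ‖g‖² + c₁₂ ‖w₃'‖² - c₁₂ (2π/L)² ‖w₃‖²` plus the nonnegative `w₂`-part.
Since `∫ g = (c₁₃ k / c₂₃) ∫ w₃`, Cauchy–Schwarz bounds `c₂₃ ‖g‖²` below by
`(c₁₃ k)² / c₂₃ · (∫ w₃)² / L`, and Wirtinger's inequality for the `L`-periodic `w₃` (via Parseval)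
bounds `‖w₃'‖²` below by `(2π/L)² (‖w₃‖² - (∫ w₃)² / L)`; what is left is `f_crit (∫ w₃)² / L ≥ 0`.
For `w*` the integrand collapses to `(c₁₃ k)² / c₂₃ · cos θ - f_crit cos 2θ` with `θ = 2πt/L`,
which integrates to zero over a period.
-/

theorem integral_sub_average_sq {a b : ℝ} (hab : a < b) {g : ℝ → ℝ}
    (hg : ContinuousOn g (Icc a b)) :
    ∫ t in a..b, (g t - (∫ s in a..b, g s) / (b - a)) ^ 2
      = (∫ t in a..b, g t ^ 2) - (∫ t in a..b, g t) ^ 2 / (b - a) := by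
  have hg1 : IntervalIntegrable g volume a b := hg.intervalIntegrable_of_Icc hab.le
  have hg2 : IntervalIntegrable (fun t => g t ^ 2) volume a b :=
    (hg.pow 2).intervalIntegrable_of_Icc hab.le
  set μ := (∫ s in a..b, g s) / (b - a)
  have hexp : ∀ t, (g t - μ) ^ 2 = (g t ^ 2 - 2 * μ * g t) + μ ^ 2 := fun t => by ring
  simp only [hexp]
  rw [integral_add (hg2.sub (hg1.const_mul _)) intervalIntegrable_const,
    integral_sub hg2 (hg1.const_mul _), integral_const_mul,
    integral_const, smul_eq_mul]
  have : b - a ≠ 0 := (sub_pos.2 hab).ne'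
  simp only [μ]
  field_simp
  ring

theorem sq_integral_div_le_integral_sq {a b : ℝ} (hab : a < b) {g : ℝ → ℝ}
    (hg : ContinuousOn g (Icc a b)) :
    (∫ t in a..b, g t) ^ 2 / (b - a) ≤ ∫ t in a..b, g t ^ 2 := by
  have : 0 ≤ ∫ t in a..b, (g t - (∫ s in a..b, g s) / (b - a)) ^ 2 :=
    integral_nonneg hab.le fun t _ => sq_nonneg _
  linarith [integral_sub_average_sq hab hg]

theorem ContinuousOn.memLp_two_restrict_Ioc {a b : ℝ} {F : ℝ → ℂ}
    (hF : ContinuousOn F (Icc a b)) : MemLp F 2 (volume.restrict (Ioc a b)) :=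
  (memLp_two_iff_integrable_sq_norm
    ((hF.mono Ioc_subset_Icc_self).aestronglyMeasurable measurableSet_Ioc)).2
    (((hF.norm.pow 2).integrableOn_Icc).mono_set Ioc_subset_Icc_self)

theorem norm_fourierCoeffOn_eq_of_hasDerivAt {a b : ℝ} (hab : a < b) {f f' : ℝ → ℂ} {n : ℤ}
    (hn : n ≠ 0) (hf : ContinuousOn f (Icc a b)) (hff' : ∀ t ∈ Ioo a b, HasDerivAt f (f' t) t)
    (hf' : ContinuousOn f' (Icc a b)) (hper : f a = f b) :
    ‖fourierCoeffOn hab f n‖ = (b - a) / (2 * π * |(n : ℝ)|) * ‖fourierCoeffOn hab f' n‖ := by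
  rw [fourierCoeffOn_of_hasDerivAt_Ioo hab hn (by rwa [uIcc_of_le hab.le])
    (fun t ht => hff' t (by simpa [hab.le] using ht))
    (hf'.intervalIntegrable_of_Icc hab.le), hper, sub_self, mul_zero, zero_sub,
    ← Complex.ofReal_sub, ← Complex.ofReal_intCast]
  simp only [norm_mul, norm_div, norm_neg, norm_one, Complex.norm_real, Complex.norm_I,
    Real.norm_eq_abs, abs_of_pos (sub_pos.2 hab), abs_of_pos pi_pos, Complex.norm_ofNat]
  ring

theorem sq_mul_norm_fourierCoeffOn_le_of_hasDerivAt {a b : ℝ} (hab : a < b) {f f' : ℝ → ℂ}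
    {n : ℤ} (hn : n ≠ 0) (hf : ContinuousOn f (Icc a b))
    (hff' : ∀ t ∈ Ioo a b, HasDerivAt f (f' t) t) (hf' : ContinuousOn f' (Icc a b))
    (hper : f a = f b) :
    (2 * π / (b - a)) ^ 2 * ‖fourierCoeffOn hab f n‖ ^ 2 ≤ ‖fourierCoeffOn hab f' n‖ ^ 2 := by
  have hT : b - a ≠ 0 := (sub_pos.2 hab).ne'
  have hratio : 2 * π / (b - a) * ((b - a) / (2 * π * |(n : ℝ)|)) = 1 / |(n : ℝ)| := by
    field_simp
  rw [norm_fourierCoeffOn_eq_of_hasDerivAt hab hn hf hff' hf' hper, mul_pow, ← mul_assoc,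
    ← mul_pow, hratio]
  refine mul_le_of_le_one_left (sq_nonneg _) (pow_le_one₀ (by positivity) ?_)
  exact div_le_one_of_le₀ (by exact_mod_cast Int.one_le_abs hn) (abs_nonneg _)

theorem wirtinger_periodic_of_integral_eq_zero {a b : ℝ} (hab : a < b) {f f' : ℝ → ℝ}
    (hf : ContinuousOn f (Icc a b)) (hff' : ∀ t ∈ Ioo a b, HasDerivAt f (f' t) t)
    (hf' : ContinuousOn f' (Icc a b)) (hper : f a = f b) (hmean : ∫ t in a..b, f t = 0) :
    (2 * π / (b - a)) ^ 2 * ∫ t in a..b, f t ^ 2 ≤ ∫ t in a..b, f' t ^ 2 := by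
  set F : ℝ → ℂ := fun t => f t
  set F' : ℝ → ℂ := fun t => f' t
  have hF : ContinuousOn F (Icc a b) := Complex.continuous_ofReal.comp_continuousOn hf
  have hF' : ContinuousOn F' (Icc a b) := Complex.continuous_ofReal.comp_continuousOn hf'
  have hcoeff : ∀ n : ℤ, (2 * π / (b - a)) ^ 2 * ‖fourierCoeffOn hab F n‖ ^ 2
      ≤ ‖fourierCoeffOn hab F' n‖ ^ 2 := by
    intro n
    rcases eq_or_ne n 0 with rfl | hn
    · have : fourierCoeffOn hab F 0 = 0 := by
        simp [fourierCoeffOn_eq_integral, F, integral_ofReal, hmean]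
      simp [this]
    · exact sq_mul_norm_fourierCoeffOn_le_of_hasDerivAt hab hn hF
        (fun t ht => (hff' t ht).ofReal_comp) hF' (by simp only [F, hper])
  have := hasSum_le hcoeff ((hasSum_sq_fourierCoeffOn hab hF.memLp_two_restrict_Ioc).mul_left _)
    (hasSum_sq_fourierCoeffOn hab hF'.memLp_two_restrict_Ioc)
  simp only [F, F', Complex.norm_real, Real.norm_eq_abs, sq_abs, smul_eq_mul] at this
  rwa [← mul_assoc, mul_comm _ (b - a)⁻¹, mul_assoc,
    mul_le_mul_iff_right₀ (inv_pos.2 (sub_pos.2 hab))] at this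

theorem wirtinger_periodic {a b : ℝ} (hab : a < b) {f f' : ℝ → ℝ}
    (hf : ContinuousOn f (Icc a b)) (hff' : ∀ t ∈ Ioo a b, HasDerivAt f (f' t) t)
    (hf' : ContinuousOn f' (Icc a b)) (hper : f a = f b) :
    (2 * π / (b - a)) ^ 2 * ((∫ t in a..b, f t ^ 2) - (∫ t in a..b, f t) ^ 2 / (b - a))
      ≤ ∫ t in a..b, f' t ^ 2 := by
  rw [← integral_sub_average_sq hab hf]
  refine wirtinger_periodic_of_integral_eq_zero hab (hf.sub continuousOn_const)
    (fun t ht => (hff' t ht).sub_const _) hf' (by rw [hper]) ?_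
  rw [integral_sub (hf.intervalIntegrable_of_Icc hab.le) intervalIntegrable_const,
    integral_const, smul_eq_mul]
  have : b - a ≠ 0 := (sub_pos.2 hab).ne'
  field_simp
  ring

theorem integral_skew_coupled_energy_eq {L : ℝ} (hL : 0 < L) {u v u' v' : ℝ → ℝ}
    (hu : ContinuousOn u (Icc 0 L)) (huu' : ∀ t ∈ Ioo 0 L, HasDerivAt u (u' t) t)
    (hu' : ContinuousOn u' (Icc 0 L)) (hv : ContinuousOn v (Icc 0 L))
    (hvv' : ∀ t ∈ Ioo 0 L, HasDerivAt v (v' t) t) (hv' : ContinuousOn v' (Icc 0 L))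
    (hu0 : u 0 = u L) (hv0 : v 0 = v L)
    {c₁₂ c₂₃ κ f : ℝ} (h23 : c₂₃ ≠ 0) :
    ∫ t in (0 : ℝ)..L,
      (c₂₃ * u' t ^ 2 + c₁₂ * v' t ^ 2) - κ * (u t * v' t - u' t * v t) + f * v t ^ 2
    = c₂₃ * (∫ t in (0 : ℝ)..L, (u' t + κ / c₂₃ * v t) ^ 2)
      + c₁₂ * (∫ t in (0 : ℝ)..L, v' t ^ 2) + (f - κ ^ 2 / c₂₃) * ∫ t in (0 : ℝ)..L, v t ^ 2 := by
  have hint : ∀ {h : ℝ → ℝ}, ContinuousOn h (Icc 0 L) → IntervalIntegrable h volume 0 L :=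
    fun hh => hh.intervalIntegrable_of_Icc hL.le
  have hg2 : IntervalIntegrable (fun t => (u' t + κ / c₂₃ * v t) ^ 2) volume 0 L :=
    hint ((hu'.add (continuousOn_const.mul hv)).pow 2)
  have hv2 : IntervalIntegrable (fun t => v t ^ 2) volume 0 L := hint (hv.pow 2)
  have hv'2 : IntervalIntegrable (fun t => v' t ^ 2) volume 0 L := hint (hv'.pow 2)
  have hp : IntervalIntegrable (fun t => u' t * v t + u t * v' t) volume 0 L :=
    hint ((hu'.mul hv).add (hu.mul hv'))
  have hprod : ∫ t in (0 : ℝ)..L, u' t * v t + u t * v' t = 0 := by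
    rw [integral_deriv_mul_eq_sub_of_hasDerivAt (by rwa [uIcc_of_le hL.le])
      (by rwa [uIcc_of_le hL.le]) (by simpa [hL.le] using huu') (by simpa [hL.le] using hvv')
      (hint hu') (hint hv'), hu0, hv0, sub_self]
  have hsquare : ∀ t, (c₂₃ * u' t ^ 2 + c₁₂ * v' t ^ 2) - κ * (u t * v' t - u' t * v t)
      + f * v t ^ 2 = (c₂₃ * (u' t + κ / c₂₃ * v t) ^ 2 + c₁₂ * v' t ^ 2
        + (f - κ ^ 2 / c₂₃) * v t ^ 2) - κ * (u' t * v t + u t * v' t) := by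
    intro t; field_simp; ring
  rw [integral_congr fun t _ => hsquare t,
    integral_sub (((hg2.const_mul _).add (hv'2.const_mul _)).add
      (hv2.const_mul _)) (hp.const_mul _),
    integral_add ((hg2.const_mul _).add (hv'2.const_mul _)) (hv2.const_mul _),
    integral_add (hg2.const_mul _) (hv'2.const_mul _),
    integral_const_mul, integral_const_mul,
    integral_const_mul, integral_const_mul, hprod, mul_zero,
    sub_zero]

theorem integral_skew_coupled_energy_nonneg {L : ℝ} (hL : 0 < L) {u v u' v' : ℝ → ℝ}
    (hu : ContinuousOn u (Icc 0 L)) (huu' : ∀ t ∈ Ioo 0 L, HasDerivAt u (u' t) t)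
    (hu' : ContinuousOn u' (Icc 0 L)) (hv : ContinuousOn v (Icc 0 L))
    (hvv' : ∀ t ∈ Ioo 0 L, HasDerivAt v (v' t) t) (hv' : ContinuousOn v' (Icc 0 L))
    (hu0 : u 0 = u L) (hv0 : v 0 = v L)
    {c₁₂ c₂₃ κ f : ℝ} (h12 : 0 ≤ c₁₂) (h23 : 0 < c₂₃)
    (hf : f = κ ^ 2 / c₂₃ - 4 * π ^ 2 * c₁₂ / L ^ 2) (hf0 : 0 ≤ f) :
    0 ≤ ∫ t in (0 : ℝ)..L,
      (c₂₃ * u' t ^ 2 + c₁₂ * v' t ^ 2) - κ * (u t * v' t - u' t * v t) + f * v t ^ 2 := by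
  have hmean : ∫ t in (0 : ℝ)..L, (u' t + κ / c₂₃ * v t) = κ / c₂₃ * ∫ t in (0 : ℝ)..L, v t := by
    have hint : ∀ {h : ℝ → ℝ}, ContinuousOn h (Icc 0 L) → IntervalIntegrable h volume 0 L :=
      fun hh => hh.intervalIntegrable_of_Icc hL.le
    rw [integral_add (hint hu') ((hint hv).const_mul _),
      integral_eq_sub_of_hasDerivAt_of_le hL.le hu huu' (hint hu'), hu0,
      integral_const_mul, sub_self, zero_add]
  have hcs := sq_integral_div_le_integral_sq (g := fun t => u' t + κ / c₂₃ * v t) hL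
    (hu'.add (continuousOn_const.mul hv))
  rw [sub_zero, hmean] at hcs
  have hwirt := wirtinger_periodic hL hv hvv' hv' hv0
  rw [sub_zero] at hwirt
  have hm : 0 ≤ f * ((∫ t in (0 : ℝ)..L, v t) ^ 2 / L) := mul_nonneg hf0 (by positivity)
  rw [integral_skew_coupled_energy_eq hL hu huu' hu' hv hvv' hv' hu0 hv0 h23.ne']
  have hκ : c₂₃ * (κ / c₂₃) ^ 2 = f + c₁₂ * (2 * π / L) ^ 2 := by
    rw [hf]; field_simp; ring
  linear_combination mul_le_mul_of_nonneg_left hcs h23.le + mul_le_mul_of_nonneg_left hwirt h12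
    + hm - ((∫ t in (0 : ℝ)..L, v t) ^ 2 / L) * hκ - (∫ t in (0 : ℝ)..L, v t ^ 2) * hf

theorem integral_cos_nat_mul_two_pi_div_mul {L : ℝ} (hL : L ≠ 0) {n : ℕ} (hn : n ≠ 0) :
    ∫ t in (0 : ℝ)..L, cos (n * (2 * π / L) * t) = 0 := by
  have hc : (n : ℝ) * (2 * π / L) ≠ 0 := by positivity
  have hsin : sin ((n : ℝ) * (2 * π / L) * L) = 0 := by
    rw [show (n : ℝ) * (2 * π / L) * L = ((2 * n : ℕ) : ℝ) * π by push_cast; field_simp]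
    exact sin_nat_mul_pi _
  rw [integral_comp_mul_left (fun x => cos x) hc, integral_cos, hsin]
  simp

theorem integral_critical_mode_eq_zero {L c₁₂ c₂₃ κ f : ℝ} (hL : L ≠ 0) (h23 : c₂₃ ≠ 0)
    (hf : f = κ ^ 2 / c₂₃ - 4 * π ^ 2 * c₁₂ / L ^ 2) :
    let u := fun t => κ * L / (2 * c₂₃ * π) * (1 - cos (2 * π * t / L))
    let v := fun t => -sin (2 * π * t / L)
    ∫ t in (0 : ℝ)..L, (c₂₃ * deriv u t ^ 2 + c₁₂ * deriv v t ^ 2)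
      - κ * (u t * deriv v t - deriv u t * v t) + f * v t ^ 2 = 0 := by
  intro u v
  have hθ : ∀ t, HasDerivAt (fun t => 2 * π * t / L) (2 * π / L) t := fun t => by
    simpa using ((hasDerivAt_id t).const_mul (2 * π)).div_const L
  have hu : deriv u = fun t => κ * L / (2 * c₂₃ * π) * (sin (2 * π * t / L) * (2 * π / L)) :=
    funext fun t => ((((hasDerivAt_cos _).comp t (hθ t)).const_sub 1).const_mul _).deriv.trans
      (by ring)
  have hv : deriv v = fun t => -(cos (2 * π * t / L) * (2 * π / L)) :=
    funext fun t => ((hasDerivAt_sin _).comp t (hθ t)).neg.deriv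
  have hmode : ∀ t, (c₂₃ * deriv u t ^ 2 + c₁₂ * deriv v t ^ 2)
      - κ * (u t * deriv v t - deriv u t * v t) + f * v t ^ 2
      = κ ^ 2 / c₂₃ * cos ((1 : ℕ) * (2 * π / L) * t)
        - f * cos ((2 : ℕ) * (2 * π / L) * t) := by
    intro t
    have h2 : (2 : ℕ) * (2 * π / L) * t = 2 * (2 * π * t / L) := by push_cast; ring
    have h1 : (1 : ℕ) * (2 * π / L) * t = 2 * π * t / L := by push_cast; ring
    rw [hu, hv, h1, h2, cos_two_mul, hf]
    simp only [u, v]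
    have hπ : π ≠ 0 := pi_ne_zero
    field_simp
    linear_combination (κ ^ 2 * L ^ 2 - 4 * c₂₃ * π ^ 2 * c₁₂) * sin_sq_add_cos_sq (2 * π * t / L)
  have hcos : ∀ n : ℕ, IntervalIntegrable (fun t => cos (n * (2 * π / L) * t)) volume 0 L :=
    fun n => (continuous_cos.comp (continuous_const.mul continuous_id)).intervalIntegrable _ _
  rw [integral_congr fun t _ => hmode t,
    integral_sub ((hcos 1).const_mul _) ((hcos 2).const_mul _),
    integral_const_mul, integral_const_mul,
    integral_cos_nat_mul_two_pi_div_mul hL one_ne_zero,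
    integral_cos_nat_mul_two_pi_div_mul hL two_ne_zero]
  ring

theorem second_variation_nonneg_at_fcrit
    (c₁₂ c₁₃ c₂₃ k L : ℝ) (h12 : 0 < c₁₂) (h13 : 0 < c₁₃) (h23 : 0 < c₂₃)
    (hL : 0 < L)
    (fcrit : ℝ) (hf : fcrit = (c₁₃ * k)^2 / c₂₃ - 4 * π^2 * c₁₂ / L^2)
    (hfpos : 0 < fcrit) :
    (∀ w₁ w₂ w₃ w₁' w₂' w₃' : ℝ → ℝ,
      (∀ t ∈ Set.Icc (0:ℝ) L, HasDerivWithinAt w₁ (w₁' t) (Set.Icc 0 L) t) →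
      (∀ t ∈ Set.Icc (0:ℝ) L, HasDerivWithinAt w₂ (w₂' t) (Set.Icc 0 L) t) →
      (∀ t ∈ Set.Icc (0:ℝ) L, HasDerivWithinAt w₃ (w₃' t) (Set.Icc 0 L) t) →
      ContinuousOn w₁' (Set.Icc 0 L) → ContinuousOn w₂' (Set.Icc 0 L) →
      ContinuousOn w₃' (Set.Icc 0 L) →
      w₁ 0 = 0 → w₂ 0 = 0 → w₃ 0 = 0 → w₁ L = 0 → w₂ L = 0 → w₃ L = 0 →
      0 ≤ ∫ t in (0:ℝ)..L,
        (c₂₃ * (w₁' t)^2 + c₁₃ * (w₂' t)^2 + c₁₂ * (w₃' t)^2)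
          - c₁₃ * k * (w₁ t * w₃' t - w₁' t * w₃ t)
          + fcrit * ((w₂ t)^2 + (w₃ t)^2)) ∧
    (∀ w₁ w₃ : ℝ → ℝ,
      w₁ = (fun t => (c₁₃ * k * L) / (2 * c₂₃ * π) * (1 - cos (2 * π * t / L))) →
      w₃ = (fun t => -sin (2 * π * t / L)) →
      (∫ t in (0:ℝ)..L,
        (c₂₃ * (deriv w₁ t)^2 + c₁₂ * (deriv w₃ t)^2)
          - c₁₃ * k * (w₁ t * deriv w₃ t - deriv w₁ t * w₃ t)
          + fcrit * (w₃ t)^2) = 0) := by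
  refine ⟨fun w₁ w₂ w₃ w₁' w₂' w₃' h1 h2 h3 hc1 hc2 hc3 b10 b20 b30 b1L b2L b3L => ?_,
    fun w₁ w₃ hw₁ hw₃ => hw₁ ▸ hw₃ ▸ integral_critical_mode_eq_zero hL.ne' h23.ne' hf⟩
  have hIoo : ∀ {w w' : ℝ → ℝ}, (∀ t ∈ Icc 0 L, HasDerivWithinAt w (w' t) (Icc 0 L) t) →
      ∀ t ∈ Ioo 0 L, HasDerivAt w (w' t) t := fun h t ht =>
    (h t (Ioo_subset_Icc_self ht)).hasDerivAt (Icc_mem_nhds ht.1 ht.2)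
  have hcont : ∀ {w w' : ℝ → ℝ}, (∀ t ∈ Icc 0 L, HasDerivWithinAt w (w' t) (Icc 0 L) t) →
      ContinuousOn w (Icc 0 L) := fun h t ht => (h t ht).continuousWithinAt
  have hsplit : ∀ t, (c₂₃ * (w₁' t)^2 + c₁₃ * (w₂' t)^2 + c₁₂ * (w₃' t)^2)
      - c₁₃ * k * (w₁ t * w₃' t - w₁' t * w₃ t) + fcrit * ((w₂ t)^2 + (w₃ t)^2)
      = ((c₂₃ * w₁' t ^ 2 + c₁₂ * w₃' t ^ 2) - c₁₃ * k * (w₁ t * w₃' t - w₁' t * w₃ t)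
          + fcrit * w₃ t ^ 2) + (c₁₃ * w₂' t ^ 2 + fcrit * w₂ t ^ 2) := fun t => by ring
  have hw1 := hcont h1
  have hw2 := hcont h2
  have hw3 := hcont h3
  rw [integral_congr fun t _ => hsplit t, integral_add
    (ContinuousOn.intervalIntegrable_of_Icc hL.le (by fun_prop))
    (ContinuousOn.intervalIntegrable_of_Icc hL.le (by fun_prop))]
  refine add_nonneg (integral_skew_coupled_energy_nonneg hL hw1 (hIoo h1) hc1 hw3
    (hIoo h3) hc3 (b10.trans b1L.symm) (b30.trans b3L.symm) h12.le h23 hf hfpos.le)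
    (integral_nonneg hL.le fun t _ => by positivity)
end
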